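/- Let I = {1,2}, J = {-1,-2}, so t = (t_1, t_2, t_{-1}, t_{-2}) with all coordinates nonzero, and fix q ∈ ℂ*. Let w_{m,n} be nowhere-vanishing functions of t satisfying, for all i ≠ j in {1,2,-1,-2} and all (m,n) ∈ ℤ², the w-equation T_i T_j(w_{m,n}) = (T_i(w_{m,n+1}) T_j(w_{m,n+1}) / w_{m+1,n+1}) · (t_i T_j(w_{m+1,n}) − t_j T_i(w_{m+1,n})) / (t_i T_j(w_{m,n+1}) − t_j T_i(w_{m,n+1})) (denominators assumed nonzero), together with the homogeneity relation T_1 T_2(w_{m,n}) = c_{m,n} T_{-1} T_{-2}(w_{m,n}) for nonzero constants c_{m,n}. Define f_{m,n} = T_1(w_{m,n})/T_{-1}(w_{m,n}) and g_{m,n} = T_1 T_{-1}(w_{m,n}) / T_{-1} T_{-2}(w_{m,n}). Then, wherever the denominators are nonzero, g_{m,n} / (T_1 T_2)^{-1}(g_{m+1,n+1}) = (c_{m+1,n}/c_{m+1,n+1}) · (f_{m+1,n} − t_1/t_{-1})(f_{m,n+1} − q c_{m,n+1} t_{-2}/t_2) / ((f_{m,n+1} − t_1/t_{-1})(f_{m+1,n}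 − q c_{m+1,n} t_{-2}/t_2)). -/

import Mathlib

/-- The `q`-shift operator on `t = (t_1, t_2, t_{-1}, t_{-2})`: `t_i ↦ q t_i` for
`i ∈ {1,2}`, `t_i ↦ q⁻¹ t_i` for `i ∈ {-1,-2}`, other coordinates unchanged.
Note `Tshift q⁻¹ 1 (Tshift q⁻¹ 2 t)` realizes the inverse shift `(T_1 T_2)⁻¹`. -/
noncomputable def Tshift (q : ℂ) (i : ℤ) (t : ℤ → ℂ) : ℤ → ℂ :=
  Function.update t i ((if 0 < i then q else q⁻¹) * t i)

/-- The `w`-equation for the pair `(i,j)` at the lattice site `(m,n)` and point `t`. -/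
def Weq (q : ℂ) (w : ℤ → ℤ → (ℤ → ℂ) → ℂ) (i j m n : ℤ) (t : ℤ → ℂ) : Prop :=
  w m n (Tshift q i (Tshift q j t))
    = w m (n + 1) (Tshift q i t) * w m (n + 1) (Tshift q j t) / w (m + 1) (n + 1) t
      * (t i * w (m + 1) n (Tshift q j t) - t j * w (m + 1) n (Tshift q i t))
      / (t i * w m (n + 1) (Tshift q j t) - t j * w m (n + 1) (Tshift q i t))

/-- `f_{m,n} = T_1(w_{m,n}) / T_{-1}(w_{m,n})`. -/
noncomputable def fVar (q : ℂ) (w : ℤ → ℤ → (ℤ → ℂ) → ℂ) (m n : ℤ) (t : ℤ → ℂ) : ℂ :=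
  w m n (Tshift q 1 t) / w m n (Tshift q (-1) t)

/-- `g_{m,n} = T_1 T_{-1}(w_{m,n}) / T_{-1} T_{-2}(w_{m,n})`. -/
noncomputable def gVar (q : ℂ) (w : ℤ → ℤ → (ℤ → ℂ) → ℂ) (m n : ℤ) (t : ℤ → ℂ) : ℂ :=
  w m n (Tshift q 1 (Tshift q (-1) t)) / w m n (Tshift q (-1) (Tshift q (-2) t))

/-!
The numerator `T_1T_{-1} w_{m,n}` of `g_{m,n}` is given by the `(1,-1)` `w`-equation at `t`, and
its denominator `T_{-1}T_{-2} w_{m,n}` by the `(2,-2)` `w`-equation at `T_{-1}T_2⁻¹ t`. The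
homogeneity relation `w(T_{-1}T_{-2} s) = w(T_1T_2 s) / c` turns the `T_{-2}`-shifts occurring
there into `T_1`-shifts, and also evaluates the denominator of `(T_1T_2)⁻¹ g_{m+1,n+1}`, whose
numerator `w_{m+1,n+1}(T_{-1}T_2⁻¹ t)` cancels against the one from the `(2,-2)` equation. What is
left is a rational identity in the values of `w_{m,n+1}` and `w_{m+1,n}` at `T_{±1} t`.
-/

section Tshift

variable {q : ℂ} {t : ℤ → ℂ}

@[simp]
lemma Tshift_apply_self (i : ℤ) : Tshift q i t i = (if 0 < i then q else q⁻¹) * t i := by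
  simp [Tshift]

@[simp]
lemma Tshift_apply_of_ne {i l : ℤ} (h : l ≠ i) : Tshift q i t l = t l :=
  Function.update_of_ne h _ _

lemma Tshift_comm (p : ℂ) {i j : ℤ} (hij : i ≠ j) :
    Tshift p i (Tshift q j t) = Tshift q j (Tshift p i t) := by
  simp only [Tshift, Function.update_of_ne hij, Function.update_of_ne hij.symm]
  exact Function.update_comm hij.symm _ _ _

lemma Tshift_Tshift_inv (hq : q ≠ 0) (i : ℤ) : Tshift q i (Tshift q⁻¹ i t) = t := by
  have : (if 0 < i then q else q⁻¹) * (if 0 < i then q⁻¹ else q⁻¹⁻¹) = 1 := by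
    split_ifs <;> field_simp
  simp only [Tshift, Function.update_idem, Function.update_self, ← mul_assoc, this, one_mul,
    Function.update_eq_self]

lemma Tshift_Tshift_Tshift_inv (hq : q ≠ 0) {i j : ℤ} (hij : i ≠ j) :
    Tshift q i (Tshift q j (Tshift q⁻¹ i t)) = Tshift q j t := by
  rw [Tshift_comm q hij, Tshift_Tshift_inv hq]

lemma Tshift_ne_zero (hq : q ≠ 0) (ht : ∀ l, t l ≠ 0) (i l : ℤ) : Tshift q i t l ≠ 0 := by
  rcases eq_or_ne l i with rfl | h
  · rw [Tshift_apply_self]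
    split_ifs <;> simp [hq, ht]
  · rw [Tshift_apply_of_ne h]
    exact ht l

end Tshift

/-- With `U = w(T_1 t)`, `V = w(T_{-1} t)`, `(a, b, x, y) = (t_1, t_2, t_{-1}, t_{-2})`, index `₁`
for `(m, n+1)` and `₂` for `(m+1, n)`, `W = w_{m+1,n+1}(t)` and `N = w_{m+1,n+1}(T_{-1}T_2⁻¹ t)`. -/
lemma g_ratio_rational_identity {K : Type*} [Field K] {q a b x y U₁ V₁ U₂ V₂ W N c₁ c₂ c₃ : K}
    (hq : q ≠ 0) (hb : b ≠ 0) (hx : x ≠ 0) (hU₁ : U₁ ≠ 0) (hV₁ : V₁ ≠ 0) (hV₂ : V₂ ≠ 0)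
    (hW : W ≠ 0) (hN : N ≠ 0) (hc₁ : c₁ ≠ 0) (hc₂ : c₂ ≠ 0) :
    U₁ * V₁ / W * (a * V₂ - x * U₂) / (a * V₁ - x * U₁) /
        (V₁ * (U₁ / c₁) / N * (q⁻¹ * b * (U₂ / c₂) - y * V₂) / (q⁻¹ * b * (U₁ / c₁) - y * V₁))
        / (N / (W / c₃))
      = c₂ / c₃ * ((U₂ / V₂ - a / x) * (U₁ / V₁ - q * c₁ * (y / b)))
        / ((U₁ / V₁ - a / x) * (U₂ / V₂ - q * c₂ * (y / b))) := by
  -- give the `t_{±1}` brackets the same sign on both sides, so that `field_simp` sees equal atoms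
  rw [← neg_sub (x * U₂), ← neg_sub (x * U₁)]
  field_simp

theorem qp6_g_evolution_general
    (q : ℂ) (hq : q ≠ 0)
    (w : ℤ → ℤ → (ℤ → ℂ) → ℂ)
    (hw : ∀ m n : ℤ, ∀ t : ℤ → ℂ, (∀ l, t l ≠ 0) → w m n t ≠ 0)
    (hweq : ∀ i ∈ ({1, 2, -1, -2} : Finset ℤ), ∀ j ∈ ({1, 2, -1, -2} : Finset ℤ),
      i ≠ j → ∀ m n : ℤ, ∀ t : ℤ → ℂ, (∀ l, t l ≠ 0) → Weq q w i j m n t)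
    (c : ℤ → ℤ → ℂ) (hc : ∀ m n : ℤ, c m n ≠ 0)
    (hhom : ∀ m n : ℤ, ∀ t : ℤ → ℂ, (∀ l, t l ≠ 0) →
      w m n (Tshift q 1 (Tshift q 2 t)) = c m n * w m n (Tshift q (-1) (Tshift q (-2) t)))
    (m n : ℤ) (t : ℤ → ℂ) (ht : ∀ l, t l ≠ 0) :
    gVar q w m n t / gVar q w (m + 1) (n + 1) (Tshift q⁻¹ 1 (Tshift q⁻¹ 2 t))
      = c (m + 1) n / c (m + 1) (n + 1)
        * ((fVar q w (m + 1) n t - t 1 / t (-1))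
            * (fVar q w m (n + 1) t - q * c m (n + 1) * (t (-2) / t 2)))
        / ((fVar q w m (n + 1) t - t 1 / t (-1))
            * (fVar q w (m + 1) n t - q * c (m + 1) n * (t (-2) / t 2))) := by
  have hom : ∀ k l s, (∀ l, s l ≠ 0) →
      w k l (Tshift q (-1) (Tshift q (-2) s)) = w k l (Tshift q 1 (Tshift q 2 s)) / c k l :=
    fun k l s hs ↦ by rw [hhom k l s hs, mul_div_cancel_left₀ _ (hc k l)]
  have hs : ∀ l, Tshift q⁻¹ 2 t l ≠ 0 := Tshift_ne_zero (inv_ne_zero hq) ht 2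
  have hτ : ∀ l, Tshift q⁻¹ 1 (Tshift q⁻¹ 2 t) l ≠ 0 := Tshift_ne_zero (inv_ne_zero hq) hs 1
  have hnum := hweq 1 (by decide) (-1) (by decide) (by decide) m n t ht
  have hden := hweq 2 (by decide) (-2) (by decide) (by decide) m n
    (Tshift q (-1) (Tshift q⁻¹ 2 t)) (Tshift_ne_zero hq hs _)
  rw [Weq] at hnum
  rw [Weq, Tshift_comm q (by decide : (-2 : ℤ) ≠ -1), Tshift_comm q (by decide : (2 : ℤ) ≠ -1),
    Tshift_Tshift_Tshift_inv hq (by decide : (2 : ℤ) ≠ -2), hom _ _ _ hs, hom _ _ _ hs,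
    Tshift_Tshift_inv hq, Tshift_Tshift_Tshift_inv hq (by decide : (2 : ℤ) ≠ -1)] at hden
  rw [gVar, gVar, hnum, hden, Tshift_Tshift_Tshift_inv hq (by decide : (1 : ℤ) ≠ -1),
    hom _ _ _ hτ, Tshift_Tshift_Tshift_inv hq (by decide : (1 : ℤ) ≠ 2), Tshift_Tshift_inv hq]
  simp only [fVar, Tshift_apply_self, zero_lt_two, if_true,
    Tshift_apply_of_ne (by decide : (2 : ℤ) ≠ -1), Tshift_apply_of_ne (by decide : (-2 : ℤ) ≠ -1),
    Tshift_apply_of_ne (by decide : (-2 : ℤ) ≠ 2)]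
  exact g_ratio_rational_identity hq (ht 2) (ht (-1)) (hw _ _ _ (Tshift_ne_zero hq ht 1))
    (hw _ _ _ (Tshift_ne_zero hq ht (-1))) (hw _ _ _ (Tshift_ne_zero hq ht (-1))) (hw _ _ _ ht)
    (hw _ _ _ (Tshift_ne_zero hq hs (-1))) (hc _ _) (hc _ _)

/-- second half of the birational time evolution `T = T_1 T_2` of the
similarity-reduced lattice `q`-UC hierarchy (`I = {1,2}`, `J = {-1,-2}`):
`g_{m,n} / (T_1T_2)⁻¹(g_{m+1,n+1}) = (c_{m+1,n}/c_{m+1,n+1})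
· (f_{m+1,n} − t_1/t_{-1})(f_{m,n+1} − q c_{m,n+1} t_{-2}/t_2)
/ ((f_{m,n+1} − t_1/t_{-1})(f_{m+1,n} − q c_{m+1,n} t_{-2}/t_2))`
wherever denominators are nonzero. -/
theorem qp6_g_evolution
    (q : ℂ) (hq : q ≠ 0)
    (w : ℤ → ℤ → (ℤ → ℂ) → ℂ)
    (hw : ∀ m n : ℤ, ∀ t : ℤ → ℂ, (∀ l, t l ≠ 0) → w m n t ≠ 0)
    (hden : ∀ i ∈ ({1, 2, -1, -2} : Finset ℤ), ∀ j ∈ ({1, 2, -1, -2} : Finset ℤ),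
      i ≠ j → ∀ m n : ℤ, ∀ t : ℤ → ℂ, (∀ l, t l ≠ 0) →
        t i * w m (n + 1) (Tshift q j t) - t j * w m (n + 1) (Tshift q i t) ≠ 0)
    (hweq : ∀ i ∈ ({1, 2, -1, -2} : Finset ℤ), ∀ j ∈ ({1, 2, -1, -2} : Finset ℤ),
      i ≠ j → ∀ m n : ℤ, ∀ t : ℤ → ℂ, (∀ l, t l ≠ 0) → Weq q w i j m n t)
    (c : ℤ → ℤ → ℂ) (hc : ∀ m n : ℤ, c m n ≠ 0)
    (hhom : ∀ m n : ℤ, ∀ t : ℤ → ℂ, (∀ l, t l ≠ 0) →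
      w m n (Tshift q 1 (Tshift q 2 t)) = c m n * w m n (Tshift q (-1) (Tshift q (-2) t)))
    (m n : ℤ) (t : ℤ → ℂ) (ht : ∀ l, t l ≠ 0)
    (h1 : gVar q w (m + 1) (n + 1) (Tshift q⁻¹ 1 (Tshift q⁻¹ 2 t)) ≠ 0)
    (h2 : fVar q w m (n + 1) t - t 1 / t (-1) ≠ 0)
    (h3 : fVar q w (m + 1) n t - q * c (m + 1) n * (t (-2) / t 2) ≠ 0) :
    gVar q w m n t / gVar q w (m + 1) (n + 1) (Tshift q⁻¹ 1 (Tshift q⁻¹ 2 t))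
      = c (m + 1) n / c (m + 1) (n + 1)
        * ((fVar q w (m + 1) n t - t 1 / t (-1))
            * (fVar q w m (n + 1) t - q * c m (n + 1) * (t (-2) / t 2)))
        / ((fVar q w m (n + 1) t - t 1 / t (-1))
            * (fVar q w (m + 1) n t - q * c (m + 1) n * (t (-2) / t 2))) :=
  qp6_g_evolution_general q hq w hw hweq c hc hhom m n t ht
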